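/- In the abstract gradient-discretisation setting with the regularised-solver setting, for every i ∈ ℕ one has ‖e_i‖_X ≤ α^i·‖e_0‖_X, and consequently the iterates v_i converge to v in the norm ‖·‖_X (hence v_i → v in X), for any initial guess v_0 ∈ X. -/

import Mathlib

/-- Weighted inner product `⟨u, v⟩_m = ∑ j, m j * u j * v j` on `X = B → ℝ`. -/
noncomputable def innerM {B : Type*} [Fintype B] (m : B → ℝ) (u v : B → ℝ) : ℝ :=
  ∑ j, m j * u j * v j

/-- Weighted norm `‖u‖_m = ⟨u, u⟩_m^{1/2}`. -/
noncomputable def normM {B : Type*} [Fintype B] (m : B → ℝ) (u : B → ℝ) : ℝ :=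
  Real.sqrt (innerM m u u)

/-- The dual norm `‖v‖_* = sup { ⟨v, w⟩_m : w ∈ X, ‖G w‖ = 1 }`. -/
noncomputable def dualNorm {B : Type*} [Fintype B] (m : B → ℝ)
    {F : Type*} [NormedAddCommGroup F] [InnerProductSpace ℝ F]
    (G : (B → ℝ) →ₗ[ℝ] F) (v : B → ℝ) : ℝ :=
  sSup {r : ℝ | ∃ w : B → ℝ, ‖G w‖ = 1 ∧ r = innerM m v w}

/-- The norm `‖w‖_X = ((L + δt/C²) ‖w‖_m² + δt ‖G w‖²)^{1/2}`. -/
noncomputable def normX {B : Type*} [Fintype B] (m : B → ℝ)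
    {F : Type*} [NormedAddCommGroup F] [InnerProductSpace ℝ F]
    (G : (B → ℝ) →ₗ[ℝ] F) (L δt C : ℝ) (w : B → ℝ) : ℝ :=
  Real.sqrt ((L + δt / C ^ 2) * normM m w ^ 2 + δt * ‖G w‖ ^ 2)

section helpers
variable {B : Type*} [Fintype B]

lemma innerM_self_nonneg (m : B → ℝ) (hm : ∀ j, 0 ≤ m j) (u : B → ℝ) :
    0 ≤ innerM m u u :=
  Finset.sum_nonneg fun j _ => by nlinarith [hm j, sq_nonneg (u j)]

lemma normM_nonneg (m : B → ℝ) (u : B → ℝ) : 0 ≤ normM m u := Real.sqrt_nonneg _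

lemma normM_sq (m : B → ℝ) (hm : ∀ j, 0 ≤ m j) (u : B → ℝ) :
    normM m u ^ 2 = innerM m u u :=
  Real.sq_sqrt (innerM_self_nonneg m hm u)

lemma weightedCS (m : B → ℝ) (hm : ∀ j, 0 ≤ m j) (c : B → ℝ) (K : ℝ) (hK : 0 ≤ K)
    (hc0 : ∀ j, 0 ≤ c j) (hcK : ∀ j, c j ≤ K) (x y : B → ℝ) :
    (∑ j, m j * (c j * x j) * y j) ≤ K * (normM m x * normM m y) := by
  have h1 : ∀ j, m j * (c j * x j) * y j
      ≤ K * ((Real.sqrt (m j) * |x j|) * (Real.sqrt (m j) * |y j|)) := by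
    intro j
    have hmj := hm j
    have hs : Real.sqrt (m j) * Real.sqrt (m j) = m j := Real.mul_self_sqrt hmj
    have h2 : m j * (c j * x j) * y j ≤ m j * c j * (|x j| * |y j|) := by
      have : x j * y j ≤ |x j| * |y j| := by
        rw [← abs_mul]; exact le_abs_self _
      nlinarith [mul_nonneg hmj (hc0 j)]
    have h3 : m j * c j * (|x j| * |y j|) ≤ m j * K * (|x j| * |y j|) := by
      have h4 : (0:ℝ) ≤ |x j| * |y j| := by positivity
      nlinarith [mul_le_mul_of_nonneg_right (hcK j) (mul_nonneg hmj h4)]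
    calc m j * (c j * x j) * y j ≤ m j * K * (|x j| * |y j|) := le_trans h2 h3
      _ = K * ((Real.sqrt (m j) * |x j|) * (Real.sqrt (m j) * |y j|)) := by
          rw [show (Real.sqrt (m j) * |x j|) * (Real.sqrt (m j) * |y j|)
              = (Real.sqrt (m j) * Real.sqrt (m j)) * (|x j| * |y j|) by ring, hs]; ring
  have hx : (∑ j, (Real.sqrt (m j) * |x j|) ^ 2) = innerM m x x := by
    unfold innerM
    refine Finset.sum_congr rfl fun j _ => ?_
    rw [mul_pow, Real.sq_sqrt (hm j), sq_abs]; ring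
  have hy : (∑ j, (Real.sqrt (m j) * |y j|) ^ 2) = innerM m y y := by
    unfold innerM
    refine Finset.sum_congr rfl fun j _ => ?_
    rw [mul_pow, Real.sq_sqrt (hm j), sq_abs]; ring
  calc (∑ j, m j * (c j * x j) * y j)
      ≤ ∑ j, K * ((Real.sqrt (m j) * |x j|) * (Real.sqrt (m j) * |y j|)) :=
        Finset.sum_le_sum fun j _ => h1 j
    _ = K * ∑ j, (Real.sqrt (m j) * |x j|) * (Real.sqrt (m j) * |y j|) := by
        rw [Finset.mul_sum]
    _ ≤ K * (normM m x * normM m y) := by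
        apply mul_le_mul_of_nonneg_left _ hK
        have h5 := Real.sum_mul_le_sqrt_mul_sqrt Finset.univ
          (fun j => Real.sqrt (m j) * |x j|) (fun j => Real.sqrt (m j) * |y j|)
        rw [hx, hy] at h5
        exact h5

lemma innerM_sub_left (m : B → ℝ) (u w φ : B → ℝ) :
    innerM m (u - w) φ = innerM m u φ - innerM m w φ := by
  unfold innerM
  rw [← Finset.sum_sub_distrib]
  exact Finset.sum_congr rfl fun j _ => by simp [Pi.sub_apply]; ring

lemma innerM_fun_sub (m : B → ℝ) (L : ℝ) (f g φ : B → ℝ) :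
    innerM m (fun j => L * f j - g j) φ = L * innerM m f φ - innerM m g φ := by
  unfold innerM
  rw [Finset.mul_sum, ← Finset.sum_sub_distrib]
  exact Finset.sum_congr rfl fun j _ => by ring

lemma poincare_sq (δt C x y : ℝ) (hδt : 0 < δt) (hC : 0 < C) (hx : 0 ≤ x)
    (hxy : x ≤ C * y) : δt / C ^ 2 * x ^ 2 ≤ δt * y ^ 2 := by
  rw [div_mul_eq_mul_div, div_le_iff₀ (by positivity)]
  nlinarith [mul_self_le_mul_self hx hxy]

lemma contraction_arith (L q δt K a bb g gh : ℝ)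
    (hL : 0 < L) (hq : 0 < q) (hδt : 0 < δt) (hK0 : 0 ≤ K)
    (ha0 : 0 ≤ a) (hb0 : 0 ≤ bb) (hg0 : 0 ≤ g) (hgh0 : 0 ≤ gh)
    (hqa : q * a ^ 2 ≤ δt * g ^ 2) (hqb : q * bb ^ 2 ≤ δt * gh ^ 2)
    (H1 : L * a ^ 2 + δt * g ^ 2 ≤ K * (bb * a)) :
    ((L + q) * a ^ 2 + δt * g ^ 2) * (L * (L + q))
      ≤ K ^ 2 * ((L + q) * bb ^ 2 + δt * gh ^ 2) := by
  have hS0 : 0 ≤ (L + q) * bb ^ 2 + δt * gh ^ 2 := by positivity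
  rcases ha0.eq_or_lt with h0 | hpos
  · subst h0
    have hgz : δt * g ^ 2 = 0 := by
      have h1 : δt * g ^ 2 ≤ 0 := by nlinarith [H1]
      have h2 : 0 ≤ δt * g ^ 2 := by positivity
      linarith
    rw [show ((L + q) * (0:ℝ) ^ 2 + δt * g ^ 2) * (L * (L + q))
        = δt * g ^ 2 * (L * (L + q)) from by ring, hgz, zero_mul]
    positivity
  · have hPa : (L + q) * a ≤ K * bb := by nlinarith [mul_pos hpos hpos]
    have hLa : L * a ≤ K * bb := by nlinarith [mul_nonneg hq.le ha0]
    have e1 : (L + q) * a ^ 2 + δt * g ^ 2 ≤ q * a ^ 2 + K * (bb * a) := by nlinarith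
    have e1' : ((L + q) * a ^ 2 + δt * g ^ 2) * (L * (L + q))
        ≤ (q * a ^ 2 + K * (bb * a)) * (L * (L + q)) := by
      apply mul_le_mul_of_nonneg_right e1 (by positivity)
    have e3 : (L * q * a) * ((L + q) * a) ≤ (L * q * a) * (K * bb) :=
      mul_le_mul_of_nonneg_left hPa (by positivity)
    have e4 : (L * K * bb) * ((L + q) * a) ≤ (L * K * bb) * (K * bb) :=
      mul_le_mul_of_nonneg_left hPa (by positivity)
    have e6 : (q * K * bb) * (L * a) ≤ (q * K * bb) * (K * bb) :=
      mul_le_mul_of_nonneg_left hLa (by positivity)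
    have e7 : 0 ≤ K ^ 2 * (δt * gh ^ 2) := by positivity
    nlinarith [e1', e3, e4, e6, e7]

end helpers

/-- Convergence conclusion of Lemma 3.2: `‖e_i‖_X ≤ α^i ‖e_0‖_X`, hence the
iterates of the regularised solver converge to `v` in the X-norm and in `X`. -/
theorem stmt_16 {B : Type*} [Fintype B] [Nonempty B] (m : B → ℝ) (hm : ∀ j, 0 < m j)
    {F : Type*} [NormedAddCommGroup F] [InnerProductSpace ℝ F]
    (G : (B → ℝ) →ₗ[ℝ] F) (hG : Function.Injective G)
    (δt Lζ L C : ℝ) (hδt : 0 < δt) (hLζ : 0 < Lζ) (hC : 0 < C)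
    (Z : ℝ → ℝ) (hZ : Differentiable ℝ Z)
    (hZ' : ∀ s : ℝ, 1 / Lζ ≤ deriv Z s ∧ deriv Z s ≤ L)
    (hpoin : ∀ w : B → ℝ, normM m w ≤ C * ‖G w‖)
    (b : (B → ℝ) →ₗ[ℝ] ℝ)
    (v : B → ℝ)
    (hv : ∀ φ : B → ℝ,
      innerM m (fun j => Z (v j)) φ + δt * (inner ℝ (G v) (G φ) : ℝ) = b φ)
    (vseq : ℕ → B → ℝ)
    (hit : ∀ i : ℕ, 1 ≤ i → ∀ φ : B → ℝ,
      L * innerM m (vseq i) φ + δt * (inner ℝ (G (vseq i)) (G φ) : ℝ)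
        = innerM m (fun j => L * vseq (i - 1) j - Z (vseq (i - 1) j)) φ + b φ) :
    (∀ i : ℕ,
      normX m G L δt C (v - vseq i)
        ≤ ((L - 1 / Lζ) / Real.sqrt (L * (L + δt / C ^ 2))) ^ i
            * normX m G L δt C (v - vseq 0)) ∧
    Filter.Tendsto (fun i : ℕ => normX m G L δt C (v - vseq i)) Filter.atTop (nhds 0) ∧
    Filter.Tendsto vseq Filter.atTop (nhds v) := by
  classical
  have hm0 : ∀ j, 0 ≤ m j := fun j => (hm j).le
  have hq : 0 < δt / C ^ 2 := by positivity
  have hLζinv : (0:ℝ) < 1 / Lζ := by positivity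
  have hZL : (1:ℝ) / Lζ ≤ L := le_trans (hZ' 0).1 (hZ' 0).2
  have hL : 0 < L := lt_of_lt_of_le hLζinv hZL
  have hK0 : (0:ℝ) ≤ L - 1 / Lζ := by linarith
  have hP : 0 < L + δt / C ^ 2 := by linarith
  have hLP : 0 < L * (L + δt / C ^ 2) := mul_pos hL hP
  set α := (L - 1 / Lζ) / Real.sqrt (L * (L + δt / C ^ 2)) with hα_def
  have hsLP : 0 < Real.sqrt (L * (L + δt / C ^ 2)) := Real.sqrt_pos.mpr hLP
  have hα0 : 0 ≤ α := div_nonneg hK0 hsLP.le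
  have hα1 : α < 1 := by
    rw [hα_def, div_lt_one hsLP]
    calc L - 1 / Lζ < L := by linarith
      _ = Real.sqrt (L * L) := (Real.sqrt_mul_self hL.le).symm
      _ ≤ Real.sqrt (L * (L + δt / C ^ 2)) := Real.sqrt_le_sqrt (by nlinarith)
  have hαsq : α ^ 2 = (L - 1 / Lζ) ^ 2 / (L * (L + δt / C ^ 2)) := by
    rw [hα_def, div_pow, Real.sq_sqrt hLP.le]
  -- Mean value theorem for Z
  have hmvt : ∀ x y : ℝ, ∃ c, 1 / Lζ ≤ c ∧ c ≤ L ∧ Z x - Z y = c * (x - y) := by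
    intro x y
    rcases lt_trichotomy x y with h | h | h
    · obtain ⟨c, _, hc⟩ := exists_deriv_eq_slope Z h hZ.continuous.continuousOn
        hZ.differentiableOn
      refine ⟨deriv Z c, (hZ' c).1, (hZ' c).2, ?_⟩
      rw [eq_div_iff (by intro h'; linarith [sub_eq_zero.mp h'] : y - x ≠ 0)] at hc
      linear_combination hc
    · exact ⟨L, hZL, le_refl L, by rw [h]; ring⟩
    · obtain ⟨c, _, hc⟩ := exists_deriv_eq_slope Z h hZ.continuous.continuousOn
        hZ.differentiableOn
      refine ⟨deriv Z c, (hZ' c).1, (hZ' c).2, ?_⟩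
      rw [eq_div_iff (by intro h'; linarith [sub_eq_zero.mp h'] : x - y ≠ 0)] at hc
      linear_combination -hc
  -- the contraction step
  have hcontr : ∀ i : ℕ,
      normX m G L δt C (v - vseq (i + 1)) ≤ α * normX m G L δt C (v - vseq i) := by
    intro i
    choose c hc1 hc2 hc3 using fun j => hmvt (v j) (vseq i j)
    have hit' := hit (i + 1) (by omega)
    simp only [Nat.add_sub_cancel] at hit'
    -- the error equation tested against e1 := v - vseq (i+1)
    have hkey : L * innerM m (v - vseq (i + 1)) (v - vseq (i + 1))
          + δt * (inner ℝ (G (v - vseq (i + 1))) (G (v - vseq (i + 1))) : ℝ)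
        = ∑ j, m j * ((L - c j) * (v j - vseq i j)) * (v - vseq (i + 1)) j := by
      have h1 := hv (v - vseq (i + 1))
      have h2 := hit' (v - vseq (i + 1))
      have hR : (∑ j, m j * ((L - c j) * (v j - vseq i j)) * (v - vseq (i + 1)) j)
          = L * innerM m v (v - vseq (i + 1)) - L * innerM m (vseq i) (v - vseq (i + 1))
            - (innerM m (fun j => Z (v j)) (v - vseq (i + 1))
               - innerM m (fun j => Z (vseq i j)) (v - vseq (i + 1))) := by
        unfold innerM
        simp only [Finset.mul_sum, ← Finset.sum_sub_distrib]
        refine Finset.sum_congr rfl fun j _ => ?_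
        linear_combination (m j * (v - vseq (i + 1)) j) * hc3 j
      have hsub : innerM m (v - vseq (i + 1)) (v - vseq (i + 1))
          = innerM m v (v - vseq (i + 1)) - innerM m (vseq (i + 1)) (v - vseq (i + 1)) :=
        innerM_sub_left m v (vseq (i + 1)) _
      have hGsub : (inner ℝ (G (v - vseq (i + 1))) (G (v - vseq (i + 1))) : ℝ)
          = (inner ℝ (G v) (G (v - vseq (i + 1))) : ℝ)
            - (inner ℝ (G (vseq (i + 1))) (G (v - vseq (i + 1))) : ℝ) := by
        rw [map_sub, inner_sub_left]
      have hdec : innerM m (fun j => L * vseq i j - Z (vseq i j)) (v - vseq (i + 1))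
          = L * innerM m (vseq i) (v - vseq (i + 1))
            - innerM m (fun j => Z (vseq i j)) (v - vseq (i + 1)) :=
        innerM_fun_sub m L (vseq i) _ _
      rw [hsub, hGsub, hR]
      rw [hdec] at h2
      linear_combination h1 - h2
    -- Cauchy-Schwarz bound
    have hxeq : normM m (fun j => v j - vseq i j) = normM m (v - vseq i) := rfl
    have hCS : (∑ j, m j * ((L - c j) * (v j - vseq i j)) * (v - vseq (i + 1)) j)
        ≤ (L - 1 / Lζ) * (normM m (v - vseq i) * normM m (v - vseq (i + 1))) := by
      have := weightedCS m hm0 (fun j => L - c j) (L - 1 / Lζ) hK0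
        (fun j => by show (0:ℝ) ≤ L - c j; linarith [hc2 j])
        (fun j => by show L - c j ≤ L - 1 / Lζ; linarith [hc1 j])
        (fun j => v j - vseq i j) (v - vseq (i + 1))
      rw [hxeq] at this
      exact this
    have hIP : (inner ℝ (G (v - vseq (i + 1))) (G (v - vseq (i + 1))) : ℝ)
        = ‖G (v - vseq (i + 1))‖ ^ 2 := real_inner_self_eq_norm_sq _
    have H1 : L * normM m (v - vseq (i + 1)) ^ 2 + δt * ‖G (v - vseq (i + 1))‖ ^ 2
        ≤ (L - 1 / Lζ) * (normM m (v - vseq i) * normM m (v - vseq (i + 1))) := by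
      rw [normM_sq m hm0, ← hIP]
      exact le_trans (le_of_eq hkey) hCS
    -- arithmetic
    set a := normM m (v - vseq (i + 1)) with ha_def
    set bb := normM m (v - vseq i) with hbb_def
    set g := ‖G (v - vseq (i + 1))‖ with hg_def
    set gh := ‖G (v - vseq i)‖ with hgh_def
    have ha0 : 0 ≤ a := normM_nonneg m _
    have hb0 : 0 ≤ bb := normM_nonneg m _
    have hg0 : 0 ≤ g := norm_nonneg _
    have hgh0 : 0 ≤ gh := norm_nonneg _
    have hpa : a ≤ C * g := hpoin _
    have hpb : bb ≤ C * gh := hpoin _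
    have hqa : δt / C ^ 2 * a ^ 2 ≤ δt * g ^ 2 := poincare_sq δt C a g hδt hC ha0 hpa
    have hqb : δt / C ^ 2 * bb ^ 2 ≤ δt * gh ^ 2 := poincare_sq δt C bb gh hδt hC hb0 hpb
    unfold normX
    rw [← ha_def, ← hbb_def, ← hg_def, ← hgh_def]
    have hS1 : (L + δt / C ^ 2) * a ^ 2 + δt * g ^ 2
        ≤ α ^ 2 * ((L + δt / C ^ 2) * bb ^ 2 + δt * gh ^ 2) := by
      rw [hαsq, div_mul_eq_mul_div, le_div_iff₀ hLP]
      exact contraction_arith L (δt / C ^ 2) δt (L - 1 / Lζ) a bb g gh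
        hL hq hδt hK0 ha0 hb0 hg0 hgh0 hqa hqb H1
    have hS0nn : 0 ≤ (L + δt / C ^ 2) * bb ^ 2 + δt * gh ^ 2 := by positivity
    calc Real.sqrt ((L + δt / C ^ 2) * a ^ 2 + δt * g ^ 2)
        ≤ Real.sqrt (α ^ 2 * ((L + δt / C ^ 2) * bb ^ 2 + δt * gh ^ 2)) :=
          Real.sqrt_le_sqrt hS1
      _ = α * Real.sqrt ((L + δt / C ^ 2) * bb ^ 2 + δt * gh ^ 2) := by
          rw [Real.sqrt_mul (sq_nonneg α), Real.sqrt_sq hα0]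
  -- part 1: geometric decay
  have hiter : ∀ i : ℕ, normX m G L δt C (v - vseq i)
      ≤ α ^ i * normX m G L δt C (v - vseq 0) := by
    intro i
    induction i with
    | zero => simp
    | succ n ih =>
      calc normX m G L δt C (v - vseq (n + 1))
          ≤ α * normX m G L δt C (v - vseq n) := hcontr n
        _ ≤ α * (α ^ n * normX m G L δt C (v - vseq 0)) :=
            mul_le_mul_of_nonneg_left ih hα0
        _ = α ^ (n + 1) * normX m G L δt C (v - vseq 0) := by ring
  have hnX : ∀ w : B → ℝ, 0 ≤ normX m G L δt C w := fun w => Real.sqrt_nonneg _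
  -- part 2: convergence in the X norm
  have htend : Filter.Tendsto (fun i : ℕ => normX m G L δt C (v - vseq i))
      Filter.atTop (nhds 0) := by
    have h0 : Filter.Tendsto
        (fun i : ℕ => α ^ i * normX m G L δt C (v - vseq 0)) Filter.atTop (nhds 0) := by
      simpa using (tendsto_pow_atTop_nhds_zero_of_lt_one hα0 hα1).mul_const
        (normX m G L δt C (v - vseq 0))
    exact squeeze_zero (fun i => hnX _) hiter h0
  -- part 3: convergence of the iterates
  have hcoord : ∀ (w : B → ℝ) (j : B),
      |w j| ≤ (Real.sqrt (L * m j))⁻¹ * normX m G L δt C w := by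
    intro w j
    have hLm : 0 < L * m j := mul_pos hL (hm j)
    have hterm : m j * w j * w j ≤ innerM m w w :=
      Finset.single_le_sum (f := fun k => m k * w k * w k)
        (fun k _ => by
          show (0:ℝ) ≤ m k * w k * w k
          nlinarith [hm0 k, sq_nonneg (w k)]) (Finset.mem_univ j)
    have hS : 0 ≤ (L + δt / C ^ 2) * normM m w ^ 2 + δt * ‖G w‖ ^ 2 := by positivity
    have h1 : L * m j * w j ^ 2 ≤ normX m G L δt C w ^ 2 := by
      rw [normX, Real.sq_sqrt hS]
      have hn := normM_sq m hm0 w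
      have h5 := mul_le_mul_of_nonneg_left hterm hL.le
      have h6 : 0 ≤ δt / C ^ 2 * normM m w ^ 2 := by positivity
      have h7 : 0 ≤ δt * ‖G w‖ ^ 2 := by positivity
      nlinarith [h5, h6, h7]
    have h2 : |w j| * Real.sqrt (L * m j) ≤ normX m G L δt C w := by
      calc |w j| * Real.sqrt (L * m j) = Real.sqrt (L * m j * w j ^ 2) := by
            rw [Real.sqrt_mul hLm.le, Real.sqrt_sq_eq_abs]; ring
        _ ≤ Real.sqrt (normX m G L δt C w ^ 2) := Real.sqrt_le_sqrt h1
        _ = normX m G L δt C w := Real.sqrt_sq (hnX w)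
    rw [inv_mul_eq_div, le_div_iff₀ (Real.sqrt_pos.mpr hLm)]
    exact h2
  have hvto : Filter.Tendsto vseq Filter.atTop (nhds v) := by
    rw [tendsto_pi_nhds]
    intro j
    have hj : Filter.Tendsto (fun i => vseq i j - v j) Filter.atTop (nhds 0) := by
      apply squeeze_zero_norm
        (a := fun i => (Real.sqrt (L * m j))⁻¹ * normX m G L δt C (v - vseq i))
      · intro i
        have := hcoord (v - vseq i) j
        simpa [Pi.sub_apply, abs_sub_comm, Real.norm_eq_abs] using this
      · simpa using htend.const_mul (Real.sqrt (L * m j))⁻¹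
    have := hj.add_const (v j)
    simpa using this
  exact ⟨hiter, htend, hvto⟩
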